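/- Fix γ > 1 and ν ≥ 0. Let ρ₁, ρ₂, β₁, β₂ be positive reals and u₁, u₂ reals. Define sᵢ = −log βᵢ − (γ−1) log ρᵢ − log 2 and entropy variables wᵢ = (γ/(γ−1) − sᵢ/(γ−1) − βᵢuᵢ², 2βᵢuᵢ, −2βᵢ). Write Δa = a₂ − a₁ and ā = (a₁+a₂)/2, let ρ̂, β̂ be the logarithmic means of (ρ₁,ρ₂) and (β₁,β₂), set q̄ = (u₁²+u₂²)/2, and define the diffusive flux g = (g¹, g², g³) by g¹ = ν·Δρ, g² = ν·Δ(ρu) (with Δ(ρu) = ρ₂u₂ − ρ₁u₁), and g³ = ν·( 𝔭/(γ−1) + (1/2)Δ(ρu²) + (ū² − q̄)·Δρ ), where 𝔭 = Δρ/(2β̂) + (ρ̄/2)·Δ(1/β) and Δ(ρu²) = ρ₂u₂² − ρ₁u₁². Then (w₂¹−w₁¹)g¹ + (w₂²−w₁²)g² + (w₂³−w₁³)g³ = ν·( (Δρ)²/ρ̂ + 2β̄ρ̄(Δu)² + (ρ̄/(γ−1))·(Δβ)²/(β₁β₂) ), and in particular this contraction is nonnegative. -/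
import Mathlib


/-- The logarithmic mean of two positive reals: `(b-a)/(log b - log a)` when `a ≠ b`,
and `a` when `a = b`. -/
noncomputable def logMean (a b : ℝ) : ℝ :=
  if a = b then a else (b - a) / (Real.log b - Real.log a)

lemma logMean_pos {a b : ℝ} (ha : 0 < a) (hb : 0 < b) : 0 < logMean a b := by
  unfold logMean
  split_ifs with h
  · exact ha
  · rcases lt_or_gt_of_ne h with hlt | hlt
    · have : Real.log a < Real.log b := Real.log_lt_log ha hlt
      exact div_pos (by linarith) (by linarith)
    · have : Real.log b < Real.log a := Real.log_lt_log hb hlt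
      have h1 : b - a < 0 := by linarith
      have h2 : Real.log b - Real.log a < 0 := by linarith
      exact div_pos_of_neg_of_neg h1 h2

lemma logMean_mul_log {a b : ℝ} (ha : 0 < a) (hb : 0 < b) :
    logMean a b * (Real.log b - Real.log a) = b - a := by
  unfold logMean
  split_ifs with h
  · simp [h]
  · have hlog : Real.log b - Real.log a ≠ 0 := by
      intro hc
      exact h (Real.log_injOn_pos.eq_iff (Set.mem_Ioi.mpr ha) (Set.mem_Ioi.mpr hb)
        |>.mp (by linarith))
    field_simp


lemma entropy_key (γ ν ρ₁ ρ₂ β₁ β₂ u₁ u₂ s₁ s₂ L M Rh Bh : ℝ)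
    (hγ1 : γ - 1 ≠ 0) (hβ₁ : β₁ ≠ 0) (hβ₂ : β₂ ≠ 0) (hRh : Rh ≠ 0) (hBh : Bh ≠ 0)
    (hL : ρ₂ = ρ₁ + Rh * L) (hM : β₂ = β₁ + Bh * M) (hs : s₁ = s₂ + M + (γ - 1) * L) :
    ((γ / (γ - 1) - s₂ / (γ - 1) - β₂ * u₂ ^ 2) - (γ / (γ - 1) - s₁ / (γ - 1) - β₁ * u₁ ^ 2))
        * (ν * (ρ₂ - ρ₁))
      + (2 * β₂ * u₂ - 2 * β₁ * u₁) * (ν * (ρ₂ * u₂ - ρ₁ * u₁))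
      + (-2 * β₂ - -2 * β₁) * (ν * (((ρ₂ - ρ₁) / (2 * Bh)
            + ((ρ₁ + ρ₂) / 2 / 2) * (1 / β₂ - 1 / β₁)) / (γ - 1)
          + (1 / 2) * (ρ₂ * u₂ ^ 2 - ρ₁ * u₁ ^ 2)
          + (((u₁ + u₂) / 2) ^ 2 - (u₁ ^ 2 + u₂ ^ 2) / 2) * (ρ₂ - ρ₁)))
      = ν * ((ρ₂ - ρ₁) ^ 2 / Rh + 2 * ((β₁ + β₂) / 2) * ((ρ₁ + ρ₂) / 2) * (u₂ - u₁) ^ 2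
          + (((ρ₁ + ρ₂) / 2) / (γ - 1)) * (β₂ - β₁) ^ 2 / (β₁ * β₂)) := by
  subst hs hL hM
  field_simp
  ring

/-- Contraction of the entropy-variable jump with the diffusive flux is the nonnegative
dissipation `ν((Δρ)²/ρ̂ + 2β̄ρ̄(Δu)² + (ρ̄/(γ−1))(Δβ)²/(β₁β₂))`. -/
theorem entropy_jump_dot_diff_flux (γ ν ρ₁ ρ₂ β₁ β₂ u₁ u₂ : ℝ) (hγ : 1 < γ) (hν : 0 ≤ ν)
    (hρ₁ : 0 < ρ₁) (hρ₂ : 0 < ρ₂) (hβ₁ : 0 < β₁) (hβ₂ : 0 < β₂)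
    (s₁ s₂ : ℝ)
    (hs₁ : s₁ = -Real.log β₁ - (γ - 1) * Real.log ρ₁ - Real.log 2)
    (hs₂ : s₂ = -Real.log β₂ - (γ - 1) * Real.log ρ₂ - Real.log 2)
    (w₁1 w₁2 w₁3 w₂1 w₂2 w₂3 : ℝ)
    (hw₁1 : w₁1 = γ / (γ - 1) - s₁ / (γ - 1) - β₁ * u₁ ^ 2)
    (hw₁2 : w₁2 = 2 * β₁ * u₁)
    (hw₁3 : w₁3 = -2 * β₁)
    (hw₂1 : w₂1 = γ / (γ - 1) - s₂ / (γ - 1) - β₂ * u₂ ^ 2)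
    (hw₂2 : w₂2 = 2 * β₂ * u₂)
    (hw₂3 : w₂3 = -2 * β₂)
    (ρbar ubar βbar qbar : ℝ)
    (hρbar : ρbar = (ρ₁ + ρ₂) / 2)
    (hubar : ubar = (u₁ + u₂) / 2)
    (hβbar : βbar = (β₁ + β₂) / 2)
    (hqbar : qbar = (u₁ ^ 2 + u₂ ^ 2) / 2)
    (pfrak g1 g2 g3 : ℝ)
    (hpfrak : pfrak = (ρ₂ - ρ₁) / (2 * logMean β₁ β₂) + (ρbar / 2) * (1 / β₂ - 1 / β₁))
    (hg1 : g1 = ν * (ρ₂ - ρ₁))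
    (hg2 : g2 = ν * (ρ₂ * u₂ - ρ₁ * u₁))
    (hg3 : g3 = ν * (pfrak / (γ - 1) + (1 / 2) * (ρ₂ * u₂ ^ 2 - ρ₁ * u₁ ^ 2)
        + (ubar ^ 2 - qbar) * (ρ₂ - ρ₁))) :
    (w₂1 - w₁1) * g1 + (w₂2 - w₁2) * g2 + (w₂3 - w₁3) * g3
        = ν * ((ρ₂ - ρ₁) ^ 2 / logMean ρ₁ ρ₂ + 2 * βbar * ρbar * (u₂ - u₁) ^ 2
            + (ρbar / (γ - 1)) * (β₂ - β₁) ^ 2 / (β₁ * β₂)) ∧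
      0 ≤ (w₂1 - w₁1) * g1 + (w₂2 - w₁2) * g2 + (w₂3 - w₁3) * g3 := by
  have hLρ : 0 < logMean ρ₁ ρ₂ := logMean_pos hρ₁ hρ₂
  have hLβ : 0 < logMean β₁ β₂ := logMean_pos hβ₁ hβ₂
  have hL := logMean_mul_log hρ₁ hρ₂
  have hM := logMean_mul_log hβ₁ hβ₂
  have hγ1 : γ - 1 ≠ 0 := by linarith
  have key := entropy_key γ ν ρ₁ ρ₂ β₁ β₂ u₁ u₂ s₁ s₂
    (Real.log ρ₂ - Real.log ρ₁) (Real.log β₂ - Real.log β₁)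
    (logMean ρ₁ ρ₂) (logMean β₁ β₂) hγ1 hβ₁.ne' hβ₂.ne' hLρ.ne' hLβ.ne'
    (by linarith) (by linarith) (by rw [hs₁, hs₂]; ring)
  have heq : (w₂1 - w₁1) * g1 + (w₂2 - w₁2) * g2 + (w₂3 - w₁3) * g3
      = ν * ((ρ₂ - ρ₁) ^ 2 / logMean ρ₁ ρ₂ + 2 * βbar * ρbar * (u₂ - u₁) ^ 2
          + (ρbar / (γ - 1)) * (β₂ - β₁) ^ 2 / (β₁ * β₂)) := by
    subst hw₁1 hw₁2 hw₁3 hw₂1 hw₂2 hw₂3 hρbar hubar hβbar hqbar hpfrak hg1 hg2 hg3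
    linear_combination key
  refine ⟨heq, heq ▸ ?_⟩
  have h1 : 0 ≤ (ρ₂ - ρ₁) ^ 2 / logMean ρ₁ ρ₂ := div_nonneg (sq_nonneg _) hLρ.le
  have h2 : 0 ≤ 2 * βbar * ρbar * (u₂ - u₁) ^ 2 := by
    subst hβbar hρbar; positivity
  have h3 : 0 ≤ (ρbar / (γ - 1)) * (β₂ - β₁) ^ 2 / (β₁ * β₂) := by
    subst hρbar
    apply div_nonneg _ (by positivity)
    apply mul_nonneg _ (sq_nonneg _)
    apply div_nonneg (by positivity) (by linarith)
  exact mul_nonneg hν (by linarith)
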